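/- arXiv:2004.12881 — 6 statements merged into one kernel-verified Lean document; each statement's English description precedes it below -/
import Mathlib

section
/- For strings P and T over an alphabet Σ, with |P| ≤ |T|, and for every index i with |P| - 1 ≤ i < |T|, the cross-correlation satisfies [T ⊗ P](i) = |P| - HAM(P, T[i-|P|+1 .. i]), where HAM denotes the Hamming distance. -/
open Function

/-- Hamming distance between (prefixes of) lists: number of aligned mismatches. -/
def hamL {α : Type*} [DecidableEq α] (A B : List α) : ℕ :=
  ((List.range A.length).filter (fun i => A[i]? ≠ B[i]?)).length

/-- Substring T[a .. b] (inclusive) with integer indices. -/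
def substr {α : Type*} (T : List α) (a b : ℤ) : List α :=
  (T.drop a.toNat).take (b - a + 1).toNat

/-- Characteristic function of a string and a character. -/
def charFn {α : Type*} [DecidableEq α] (X : List α) (c : α) : ℤ → ℤ :=
  fun i => if 0 ≤ i ∧ X[i.toNat]? = some c then 1 else 0

/-- Convolution of two (finitely supported) functions ℤ → ℤ. -/
noncomputable def conv (f g : ℤ → ℤ) : ℤ → ℤ := fun i => ∑ᶠ j : ℤ, f j * g (i - j)

/-- Cross-correlation of two strings. -/
noncomputable def cross {α : Type*} [Fintype α] [DecidableEq α] (X Y : List α) : ℤ → ℤ :=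
  fun i => ∑ c : α, conv (charFn X c) (charFn Y.reverse c) i

/-- Backward difference of `f` due to `ρ`. -/
def bdiff (ρ : ℤ) (f : ℤ → ℤ) : ℤ → ℤ := fun i => f i - f (i - ρ)

/-- `ρ` is a `d`-period of `X`: HAM(X[0..n-ρ-1], X[ρ..n-1]) ≤ d. -/
def isPeriodL {α : Type*} [DecidableEq α] (X : List α) (ρ d : ℕ) : Prop :=
  hamL (X.take (X.length - ρ)) (X.drop ρ) ≤ d

/-!
Since `Y^R_c(m) = Y_c(|Y| - 1 - m)`, the substitution `j = i - |Y| + 1 + k` turns the convolution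
at `i` into the correlation `∑_{k < |Y|} X_c(i - |Y| + 1 + k) · Y_c(k)`. For fixed `k`, the sum over
`c` is `1` exactly when position `k` of the window `X[i-|Y|+1 .. i]` agrees with `Y[k]`, so
`[X ⊗ Y](i)` counts the matching positions, which is `|Y|` minus the Hamming distance.
-/

open Finset

section

variable {α : Type*} [DecidableEq α]

theorem charFn_ne_zero {X : List α} {c : α} {k : ℤ} (h : charFn X c k ≠ 0) :
    0 ≤ k ∧ k < X.length := by
  unfold charFn at h
  split_ifs at h with hk
  · have := (List.getElem?_eq_some_iff.1 hk.2).1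
    omega
  · exact absurd rfl h

theorem charFn_reverse (X : List α) (c : α) (k : ℤ) :
    charFn X.reverse c k = charFn X c (X.length - 1 - k) := by
  by_cases hk : 0 ≤ k ∧ k < X.length
  · unfold charFn
    rw [List.getElem?_reverse (by omega), show (X.length - 1 - k).toNat = X.length - 1 - k.toNat by omega]
    simp only [hk.1, show 0 ≤ (X.length : ℤ) - 1 - k by omega, true_and]
  · have hX : charFn X c (X.length - 1 - k) = 0 :=
      by_contra fun h => hk (by have := charFn_ne_zero h; omega)
    have hXr : charFn X.reverse c k = 0 :=
      by_contra fun h => hk (by simpa using charFn_ne_zero h)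
    rw [hX, hXr]

theorem conv_charFn_reverse (f : ℤ → ℤ) (Y : List α) (c : α) (i : ℤ) :
    conv f (charFn Y.reverse c) i
      = ∑ k ∈ range Y.length, f (i - Y.length + 1 + k) * charFn Y c k := by
  have hsupp : support (fun k : ℤ => f (i - Y.length + 1 + k) * charFn Y c k)
      ⊆ ((range Y.length).image (Nat.cast : ℕ → ℤ) : Set ℤ) := by
    intro k hk
    obtain ⟨hk0, hkY⟩ := charFn_ne_zero (right_ne_zero_of_mul hk)
    simp only [coe_image, coe_range, Set.mem_image, Set.mem_Iio]
    exact ⟨k.toNat, by omega, by omega⟩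
  unfold conv
  rw [← finsum_comp_equiv (Equiv.addLeft (i - Y.length + 1))]
  calc _ = ∑ᶠ k : ℤ, f (i - Y.length + 1 + k) * charFn Y c k := by
        congr 1 with k
        rw [Equiv.coe_addLeft, charFn_reverse]
        ring_nf
    _ = _ := by
      rw [finsum_eq_sum_of_support_subset _ hsupp, sum_image Nat.cast_injective.injOn]

theorem charFn_substr (X : List α) (c : α) {a b : ℤ} (ha : 0 ≤ a) {k : ℕ} (hk : k < b - a + 1) :
    charFn (substr X a b) c k = charFn X c (a + k) := by
  simp only [charFn, substr, Int.toNat_natCast, List.getElem?_take, List.getElem?_drop,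
    if_pos (show k < (b - a + 1).toNat by omega), show a.toNat + k = (a + k).toNat by omega,
    Nat.cast_nonneg, true_and, show 0 ≤ a + k by omega]

theorem sum_charFn_mul_charFn [Fintype α] (A B : List α) {k : ℕ} (hk : k < B.length) :
    ∑ c, charFn A c k * charFn B c k = if A[k]? = B[k]? then 1 else 0 := by
  simp only [charFn, Nat.cast_nonneg, true_and, Int.toNat_natCast, List.getElem?_eq_getElem hk,
    Option.some_inj, mul_ite, mul_one, mul_zero, sum_ite_eq, mem_univ, if_true]

theorem sum_range_ite_getElem?_eq_sub_hamL (A B : List α) :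
    (∑ k ∈ range B.length, if A[k]? = B[k]? then (1 : ℤ) else 0) = B.length - hamL B A := by
  have hham : hamL B A = #{k ∈ range B.length | ¬A[k]? = B[k]?} := by
    simp only [hamL, eq_comm (a := A[_]?)]
    rfl
  have hsplit := card_filter_add_card_filter_not (s := range B.length) (p := fun k => A[k]? = B[k]?)
  rw [card_range] at hsplit
  rw [sum_boole, hham]
  omega

theorem cross_eq_sum_range [Fintype α] (X Y : List α) (i : ℤ) :
    cross X Y i = ∑ k ∈ range Y.length, ∑ c, charFn X c (i - Y.length + 1 + k) * charFn Y c k := by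
  simp only [cross, conv_charFn_reverse]
  exact sum_comm

end

theorem stmt0_general {α : Type*} [Fintype α] [DecidableEq α]
    (P T : List α)
    (i : ℤ) (hi1 : (P.length : ℤ) - 1 ≤ i) :
    cross T P i
      = (P.length : ℤ) - (hamL P (substr T (i - P.length + 1) i) : ℤ) := by
  have ha : 0 ≤ i - P.length + 1 := by omega
  calc cross T P i
      = ∑ k ∈ range P.length, ∑ c, charFn (substr T (i - P.length + 1) i) c k * charFn P c k := by
        rw [cross_eq_sum_range]
        refine sum_congr rfl fun k hk => ?_
        simp only [charFn_substr T _ ha (show (k : ℤ) < i - (i - P.length + 1) + 1 by rw [mem_range] at hk; omega)]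
    _ = _ := by
      simp only [sum_congr rfl fun k hk => sum_charFn_mul_charFn _ P (mem_range.1 hk),
        sum_range_ite_getElem?_eq_sub_hamL]

theorem stmt0 {α : Type*} [Fintype α] [DecidableEq α]
    (P T : List α) (hlen : P.length ≤ T.length)
    (i : ℤ) (hi1 : (P.length : ℤ) - 1 ≤ i) (hi2 : i < T.length) :
    cross T P i
      = (P.length : ℤ) - (hamL P (substr T (i - P.length + 1) i) : ℤ) :=
  stmt0_general P T i hi1
end

section
/- If a string X of length n has a d-period ρ (i.e., HAM(X[0 .. n-ρ-1], X[ρ .. n-1]) ≤ d), then Σ_{c ∈ Σ} |supp(Δ_ρ[X_c])| ≤ 2(d + ρ), where Δ_ρ[f](i) = f(i) - f(i-ρ) is the backward difference. -/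
open Function

/-!
For a position `i`, at most one character occurs at `i` and at most one at `i - ρ`, so at most
two characters `c` have `Δ_ρ[X_c](i) ≠ 0`; at most one if `i < ρ` or `i ≥ n`, where one of the
two positions lies outside `X`; and none if `ρ ≤ i < n` and `X[i] = X[i - ρ]`. The remaining
positions `ρ ≤ i < n` are the at most `d` mismatches of the `d`-period, so summing over the
positions `0 ≤ i < n + ρ` outside of which every `Δ_ρ[X_c]` vanishes gives `ρ + ρ + 2d`.
-/

open Finset

lemma sum_ncard_support_eq_sum_card_filter {ι κ M : Type*} [Fintype ι] [Zero M] [DecidableEq M]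
    (f : ι → κ → M) (s : Finset κ) (hs : ∀ c, support (f c) ⊆ s) :
    ∑ c, (support (f c)).ncard = ∑ i ∈ s, #{c | f c i ≠ 0} := by
  have hsupp : ∀ c, support (f c) = ↑{i ∈ s | f c i ≠ 0} := fun c => by
    ext i
    simpa using fun hi => hs c hi
  simp only [hsupp, Set.ncard_coe_finset, card_filter]
  exact sum_comm

lemma card_filter_bdiff_ne_zero_le {ι : Type*} [Fintype ι] [DecidableEq ι]
    (f : ι → ℤ → ℤ) (ρ i : ℤ) :
    #{c | bdiff ρ (f c) i ≠ 0} ≤ #{c | f c i ≠ 0} + #{c | f c (i - ρ) ≠ 0} := by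
  refine (card_le_card fun c hc => ?_).trans (card_union_le _ _)
  simp only [mem_filter, mem_univ, true_and, mem_union] at hc ⊢
  by_contra! h
  exact hc (by simp [bdiff, h.1, h.2])

section CharFn

variable {α : Type*} [DecidableEq α] (X : List α)

lemma charFn_ne_zero_iff (c : α) (i : ℤ) :
    charFn X c i ≠ 0 ↔ 0 ≤ i ∧ X[i.toNat]? = some c := by
  unfold charFn
  split <;> simp_all

lemma charFn_eq_zero_of_neg (c : α) {i : ℤ} (hi : i < 0) : charFn X c i = 0 := by
  simp [charFn, not_le.2 hi]

lemma charFn_eq_zero_of_length_le (c : α) {i : ℤ} (hi : X.length ≤ i) : charFn X c i = 0 := by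
  have : X.length ≤ i.toNat := by omega
  simp [charFn, this]

lemma charFn_eq_of_getElem?_eq (c : α) {i j : ℤ} (hi : 0 ≤ i) (hj : 0 ≤ j)
    (h : X[i.toNat]? = X[j.toNat]?) : charFn X c i = charFn X c j := by
  simp [charFn, hi, hj, h]

lemma support_bdiff_charFn_subset (c : α) (ρ : ℕ) :
    support (bdiff ρ (charFn X c)) ⊆ ↑(Ico 0 (X.length + ρ : ℤ)) := by
  intro i hi
  by_contra hI
  simp only [coe_Ico, Set.mem_Ico, not_and_or, not_le, not_lt] at hI
  apply hi
  rcases hI with hI | hI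
  · simp [bdiff, charFn_eq_zero_of_neg X c hI, charFn_eq_zero_of_neg X c (i := i - ρ) (by omega)]
  · simp [bdiff, charFn_eq_zero_of_length_le X c (i := i) (by omega),
      charFn_eq_zero_of_length_le X c (i := i - ρ) (by omega)]

variable [Fintype α]

lemma card_filter_charFn_ne_zero_le_one (i : ℤ) : #{c | charFn X c i ≠ 0} ≤ 1 := by
  refine card_le_one.2 fun a ha b hb => ?_
  simp only [mem_filter, charFn_ne_zero_iff] at ha hb
  exact Option.some_injective _ (ha.2.2.symm.trans hb.2.2)

end CharFn

section Mismatches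

variable {α : Type*} [DecidableEq α] (X : List α) (ρ : ℕ)

noncomputable def mismatches : Finset ℤ :=
  {i ∈ Ico (ρ : ℤ) X.length | X[i.toNat]? ≠ X[(i - ρ).toNat]?}

lemma card_mismatches_le_hamL :
    #(mismatches X ρ) ≤ hamL (X.take (X.length - ρ)) (X.drop ρ) := by
  change _ ≤ #{j ∈ range (X.take (X.length - ρ)).length | _}
  refine card_le_card_of_injOn (fun i => (i - ρ).toNat) (fun i hi => ?_) fun i hi j hj hij => ?_
  · simp only [mismatches, coe_filter, Set.mem_ofPred_eq, mem_Ico] at hi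
    simp only [coe_filter, mem_range, List.length_take, Set.mem_ofPred_eq]
    refine ⟨by omega, ?_⟩
    rw [List.getElem?_take_of_lt (by omega), List.getElem?_drop,
      show ρ + (i - ρ).toNat = i.toNat by omega]
    exact hi.2.symm
  · simp only [mismatches, coe_filter, mem_Ico, Set.mem_ofPred_eq] at hi hj
    simp only at hij
    omega

variable [Fintype α]

lemma card_filter_bdiff_charFn_ne_zero_le (i : ℤ) :
    #{c | bdiff ρ (charFn X c) i ≠ 0} ≤
      (if i < ρ then 1 else 0) + (if X.length ≤ i then 1 else 0) +
        2 * (if i ∈ mismatches X ρ then 1 else 0) := by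
  have hsplit := card_filter_bdiff_ne_zero_le (charFn X) ρ i
  have hnow := card_filter_charFn_ne_zero_le_one X i
  have hbefore := card_filter_charFn_ne_zero_le_one X (i - ρ)
  by_cases hlt : i < ρ
  · have hbefore0 : #{c | charFn X c (i - ρ) ≠ 0} = 0 := by
      simp [charFn_eq_zero_of_neg X _ (show i - ρ < 0 by omega)]
    simp only [hlt, if_true]
    omega
  by_cases hge : X.length ≤ i
  · have hnow0 : #{c | charFn X c i ≠ 0} = 0 := by simp [charFn_eq_zero_of_length_le X _ hge]
    simp only [hge, if_true]
    omega
  by_cases hmis : i ∈ mismatches X ρ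
  · simp only [hmis, if_true]
    omega
  have hmatch : X[i.toNat]? = X[(i - ρ).toNat]? := by
    simp only [mismatches, mem_filter, mem_Ico] at hmis
    grind
  have hnone : #{c | bdiff ρ (charFn X c) i ≠ 0} = 0 := by
    simp [bdiff, charFn_eq_of_getElem?_eq X _ (by omega) (by omega) hmatch]
  omega

end Mismatches

theorem stmt2_general {α : Type*} [Fintype α] [DecidableEq α]
    (X : List α) (ρ d : ℕ)
    (hper : isPeriodL X ρ d) :
    ∑ c : α, (Function.support (bdiff (ρ : ℤ) (charFn X c))).ncard ≤ 2 * (d + ρ) := by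
  set I := Ico (0 : ℤ) (X.length + ρ)
  calc ∑ c : α, (support (bdiff ρ (charFn X c))).ncard
      = ∑ i ∈ I, #{c | bdiff ρ (charFn X c) i ≠ 0} :=
        sum_ncard_support_eq_sum_card_filter _ _ (support_bdiff_charFn_subset X · ρ)
    _ ≤ ∑ i ∈ I, ((if i < ρ then 1 else 0) + (if X.length ≤ i then 1 else 0) +
          2 * (if i ∈ mismatches X ρ then 1 else 0)) :=
        sum_le_sum fun i _ => card_filter_bdiff_charFn_ne_zero_le X ρ i
    _ = #{i ∈ I | i < (ρ : ℤ)} + #{i ∈ I | (X.length : ℤ) ≤ i} +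
          2 * #{i ∈ I | i ∈ mismatches X ρ} := by
        simp only [sum_add_distrib, ← mul_sum, sum_boole, Nat.cast_id]
    _ ≤ ρ + ρ + 2 * d := by
        gcongr
        · simp only [I, Ico_filter_lt, Int.card_Ico]
          omega
        · simp only [I, Ico_filter_le, Int.card_Ico]
          omega
        · exact (card_le_card fun i hi => (mem_filter.1 hi).2).trans
            ((card_mismatches_le_hamL X ρ).trans hper)
    _ = 2 * (d + ρ) := by ring

theorem stmt2 {α : Type*} [Fintype α] [DecidableEq α]
    (X : List α) (ρ d : ℕ) (hρ : 0 < ρ) (hρn : ρ ≤ X.length)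
    (hper : isPeriodL X ρ d) :
    ∑ c : α, (Function.support (bdiff (ρ : ℤ) (charFn X c))).ncard ≤ 2 * (d + ρ) :=
  stmt2_general X ρ d hper
end

section
/- For strings P and T, every i ∈ ℤ, and every positive integer ρ: [T ⊗ P](i) = [Σ_{c ∈ Σ} Δ_ρ[T_c] ∗ Δ_ρ[P^R_c]](i) - [T ⊗ P](i - 2ρ) + 2·[T ⊗ P](i - ρ). -/
open Function

/-! Convolving with a finitely supported function commutes with `Δ_ρ` on either side, so
`∑ c, Δ_ρ T_c ∗ Δ_ρ P^R_c = Δ_ρ² (T ⊗ P)`; expanding `Δ_ρ²` gives the identity. -/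

lemma hasFiniteSupport_charFn {α : Type*} [DecidableEq α] (X : List α) (c : α) :
    (charFn X c).HasFiniteSupport := by
  refine (Set.finite_Ico 0 (X.length : ℤ)).subset fun j hj => ?_
  simp only [mem_support, charFn, ne_eq, ite_eq_right_iff, not_forall] at hj
  obtain ⟨⟨hj0, hjX⟩, -⟩ := hj
  have := (List.getElem?_eq_some_iff.1 hjX).1
  exact ⟨hj0, by omega⟩

lemma Function.HasFiniteSupport.comp_sub {f : ℤ → ℤ} (hf : f.HasFiniteSupport) (ρ : ℤ) :
    (fun j => f (j - ρ)).HasFiniteSupport :=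
  Set.Finite.preimage sub_left_injective.injOn hf

lemma bdiff_eq_sub (ρ : ℤ) (f : ℤ → ℤ) : bdiff ρ f = f - fun j => f (j - ρ) := rfl

section Conv

variable {f f' g g' : ℤ → ℤ}

lemma conv_sub_left (hf : f.HasFiniteSupport) (hf' : f'.HasFiniteSupport) (i : ℤ) :
    conv (f - f') g i = conv f g i - conv f' g i := by
  simp only [conv, Pi.sub_apply, sub_mul]
  exact finsum_sub_distrib (hf.fun_mul_left _) (hf'.fun_mul_left _)

lemma conv_sub_right (hf : f.HasFiniteSupport) (i : ℤ) :
    conv f (g - g') i = conv f g i - conv f g' i := by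
  simp only [conv, Pi.sub_apply, mul_sub]
  exact finsum_sub_distrib (hf.fun_mul_left _) (hf.fun_mul_left _)

lemma conv_comp_sub_left (f g : ℤ → ℤ) (ρ i : ℤ) :
    conv (fun j => f (j - ρ)) g i = conv f g (i - ρ) :=
  Eq.trans (finsum_congr fun j => by simp [sub_sub_sub_cancel_right])
    (finsum_comp_equiv (Equiv.subRight ρ))

lemma conv_comp_sub_right (f g : ℤ → ℤ) (ρ i : ℤ) :
    conv f (fun j => g (j - ρ)) i = conv f g (i - ρ) :=
  finsum_congr fun j => by rw [sub_right_comm]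

lemma conv_bdiff_left (hf : f.HasFiniteSupport) (ρ : ℤ) :
    conv (bdiff ρ f) g = bdiff ρ (conv f g) := by
  ext i
  rw [bdiff_eq_sub, conv_sub_left hf (hf.comp_sub ρ), conv_comp_sub_left, bdiff]

lemma conv_bdiff_right (hf : f.HasFiniteSupport) (ρ : ℤ) :
    conv f (bdiff ρ g) = bdiff ρ (conv f g) := by
  ext i
  rw [bdiff_eq_sub, conv_sub_right hf, conv_comp_sub_right, bdiff]

lemma conv_bdiff_bdiff (hf : f.HasFiniteSupport) (ρ : ℤ) :
    conv (bdiff ρ f) (bdiff ρ g) = bdiff ρ (bdiff ρ (conv f g)) := by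
  rw [conv_bdiff_left hf, conv_bdiff_right hf]

end Conv

lemma bdiff_bdiff_apply (ρ : ℤ) (f : ℤ → ℤ) (i : ℤ) :
    bdiff ρ (bdiff ρ f) i = f i - 2 * f (i - ρ) + f (i - 2 * ρ) := by
  rw [bdiff, bdiff, bdiff, show i - ρ - ρ = i - 2 * ρ by ring]
  ring

lemma bdiff_bdiff_cross {α : Type*} [Fintype α] [DecidableEq α] (X Y : List α) (ρ i : ℤ) :
    bdiff ρ (bdiff ρ (cross X Y)) i
      = ∑ c : α, conv (bdiff ρ (charFn X c)) (bdiff ρ (charFn Y.reverse c)) i := by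
  simp only [conv_bdiff_bdiff (hasFiniteSupport_charFn X _), bdiff, cross,
    Finset.sum_sub_distrib]

theorem stmt3_general {α : Type*} [Fintype α] [DecidableEq α]
    (P T : List α) (i : ℤ) (ρ : ℤ) :
    cross T P i
      = (∑ c : α, conv (bdiff ρ (charFn T c)) (bdiff ρ (charFn P.reverse c)) i)
          - cross T P (i - 2 * ρ) + 2 * cross T P (i - ρ) := by
  rw [← bdiff_bdiff_cross, bdiff_bdiff_apply]
  ring

theorem stmt3 {α : Type*} [Fintype α] [DecidableEq α]
    (P T : List α) (i : ℤ) (ρ : ℤ) (hρ : 0 < ρ) :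
    cross T P i
      = (∑ c : α, conv (bdiff ρ (charFn T c)) (bdiff ρ (charFn P.reverse c)) i)
          - cross T P (i - 2 * ρ) + 2 * cross T P (i - ρ) :=
  stmt3_general P T i ρ
end

section
/- Let F = (f_1, ..., f_t) and G = (g_1, ..., g_t) be sequences of finitely supported functions ℤ → ℤ with supp(F) ⊆ [0, q·s) and supp(G) ⊆ [0, q·s), where s, q are positive integers. Define F*_i to be the sequence of all restrictions f_j|_{Φ_{i-a}} for a = 0, ..., q-1 and j = 1, ..., t, and G* to be the sequence of all restrictions g_j|_{Γ_a} for a = 0, ..., q-1, paired so that f_j|_{Φ_{i-a}} is matched with g_j|_{Γ_a}. Then for every i ∈ [1, q], the restriction of F ⊗ G = Σ_{j=1}^t f_j ∗ g_j to the interval Φ_i equals the restriction of F*_i ⊗ G* to Φ_i. -/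
/-- The interval Γ_a = [s(a-1), s(a+1)) of integers. -/
def Gam (s a : ℤ) : Set ℤ := {x | s * (a - 1) ≤ x ∧ x < s * (a + 1)}

/-- The interval Φ_b = [s(b-1), s·b) of integers. -/
def Phi (s b : ℤ) : Set ℤ := {x | s * (b - 1) ≤ x ∧ x < s * b}

lemma key_pointwise (s : ℤ) (hs : 0 < s) (q : ℕ) (i : ℕ) (hi1 : 1 ≤ i) (hi2 : i ≤ q)
    (f g : ℤ → ℤ)
    (hfs : Function.support f ⊆ Set.Ico 0 ((q : ℤ) * s))
    (hgs : Function.support g ⊆ Set.Ico 0 ((q : ℤ) * s))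
    (x : ℤ) (hx : x ∈ Phi s (i : ℤ)) (y : ℤ) :
    f y * g (x - y)
      = ∑ a ∈ Finset.range q,
          (Phi s ((i : ℤ) - a)).indicator f y * (Gam s a).indicator g (x - y) := by
  by_cases h0 : f y * g (x - y) = 0
  · rw [h0]
    symm
    apply Finset.sum_eq_zero
    intro a _
    rcases mul_eq_zero.mp h0 with h | h
    · have : (Phi s ((i : ℤ) - a)).indicator f y = 0 := by
        by_cases hy : y ∈ Phi s ((i : ℤ) - a)
        · rw [Set.indicator_of_mem hy, h]
        · rw [Set.indicator_of_notMem hy]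
      rw [this, zero_mul]
    · have : (Gam s a).indicator g (x - y) = 0 := by
        by_cases hy : x - y ∈ Gam s a
        · rw [Set.indicator_of_mem hy, h]
        · rw [Set.indicator_of_notMem hy]
      rw [this, mul_zero]
  · have hfy : f y ≠ 0 := fun h => h0 (by rw [h, zero_mul])
    have hgy : g (x - y) ≠ 0 := fun h => h0 (by rw [h, mul_zero])
    obtain ⟨hy0, hyq⟩ := hfs hfy
    obtain ⟨hz0, hzq⟩ := hgs hgy
    set b := y / s with hbdef
    have hmod := Int.emod_add_mul_ediv y s
    rw [← hbdef] at hmod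
    have hm0 : 0 ≤ y % s := Int.emod_nonneg y (ne_of_gt hs)
    have hm1 : y % s < s := Int.emod_lt_of_pos y hs
    have hb1 : s * b ≤ y := by linarith
    have hb2 : y < s * (b + 1) := by
      have : s * (b + 1) = s * b + s := by ring
      linarith
    have hb0 : 0 ≤ b := Int.ediv_nonneg hy0 (le_of_lt hs)
    have hxi : x < s * i := hx.2
    have hxi1 : s * ((i : ℤ) - 1) ≤ x := hx.1
    have hylt : y < s * i := by omega
    have hbi : b < (i : ℤ) := by
      by_contra hcon
      push_neg at hcon
      have : s * (i : ℤ) ≤ s * b := by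
        exact mul_le_mul_of_nonneg_left hcon (le_of_lt hs)
      omega
    set a₀ : ℕ := ((i : ℤ) - 1 - b).toNat with ha₀def
    have ha₀ : (a₀ : ℤ) = (i : ℤ) - 1 - b := Int.toNat_of_nonneg (by omega)
    have ha₀q : a₀ ∈ Finset.range q := by
      rw [Finset.mem_range]
      omega
    rw [Finset.sum_eq_single_of_mem a₀ ha₀q]
    · have hyPhi : y ∈ Phi s ((i : ℤ) - a₀) := by
        constructor
        · have e : s * ((i : ℤ) - a₀ - 1) = s * b := by rw [ha₀]; ring
          rw [e]; exact hb1
        · have e : s * ((i : ℤ) - a₀) = s * (b + 1) := by rw [ha₀]; ring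
          rw [e]; exact hb2
      have hzGam : x - y ∈ Gam s (a₀ : ℤ) := by
        constructor
        · have e : s * ((a₀ : ℤ) - 1) = s * ((i : ℤ) - 1) - s * (b + 1) := by
            rw [ha₀]; ring
          omega
        · have e : s * ((a₀ : ℤ) + 1) = s * (i : ℤ) - s * b := by
            rw [ha₀]; ring
          omega
      rw [Set.indicator_of_mem hyPhi, Set.indicator_of_mem hzGam]
    · intro a ha hne
      have hyn : y ∉ Phi s ((i : ℤ) - a) := by
        intro hy
        obtain ⟨h1, h2⟩ := hy
        -- s*(i-a-1) ≤ y < s*(i-a), s*b ≤ y < s*(b+1) ⇒ i-a-1 = b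
        have hlt1 : s * ((i : ℤ) - a - 1) < s * (b + 1) := by omega
        have hlt2 : s * b < s * ((i : ℤ) - a) := by omega
        have e1 : (i : ℤ) - a - 1 < b + 1 := lt_of_mul_lt_mul_left hlt1 (le_of_lt hs)
        have e2 : b < (i : ℤ) - a := lt_of_mul_lt_mul_left hlt2 (le_of_lt hs)
        have : (a : ℤ) = (a₀ : ℤ) := by omega
        exact hne (by exact_mod_cast this)
      rw [Set.indicator_of_notMem hyn, zero_mul]

theorem stmt8 (t : ℕ) (F G : Fin t → ℤ → ℤ) (s : ℤ) (hs : 0 < s)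
    (q : ℕ) (hq : 0 < q)
    (hF : ∀ j, (Function.support (F j)).Finite)
    (hG : ∀ j, (Function.support (G j)).Finite)
    (hFs : ∀ j, Function.support (F j) ⊆ Set.Ico 0 ((q : ℤ) * s))
    (hGs : ∀ j, Function.support (G j) ⊆ Set.Ico 0 ((q : ℤ) * s))
    (i : ℕ) (hi1 : 1 ≤ i) (hi2 : i ≤ q)
    (x : ℤ) (hx : x ∈ Phi s (i : ℤ)) :
    ∑ j, conv (F j) (G j) x
      = ∑ a ∈ Finset.range q, ∑ j,
          conv ((Phi s ((i : ℤ) - a)).indicator (F j))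
               ((Gam s a).indicator (G j)) x := by
  rw [Finset.sum_comm]
  apply Finset.sum_congr rfl
  intro j _
  set S := (hF j).toFinset with hSdef
  have hsub : Function.support (fun y => F j y * G j (x - y)) ⊆ (S : Set ℤ) := by
    intro y hy
    have : F j y ≠ 0 := fun h => hy (by simp [h])
    simpa [hSdef] using this
  have h1 : conv (F j) (G j) x = ∑ y ∈ S, F j y * G j (x - y) :=
    finsum_eq_finset_sum_of_support_subset _ hsub
  have h2 : ∀ a : ℕ,
      conv ((Phi s ((i : ℤ) - a)).indicator (F j)) ((Gam s a).indicator (G j)) x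
        = ∑ y ∈ S, (Phi s ((i : ℤ) - a)).indicator (F j) y
            * (Gam s a).indicator (G j) (x - y) := by
    intro a
    apply finsum_eq_finset_sum_of_support_subset
    intro y hy
    have hind : (Phi s ((i : ℤ) - a)).indicator (F j) y ≠ 0 := fun h => hy (by simp [h])
    have : F j y ≠ 0 := fun h => hind (by simp [Set.indicator_apply, h])
    simpa [hSdef] using this
  rw [h1]
  simp only [h2]
  rw [Finset.sum_comm]
  apply Finset.sum_congr rfl
  intro y _
  exact key_pointwise s hs q i hi1 hi2 (F j) (G j) (hFs j) (hGs j) x hx y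
end

section
/- Let U and V be strings, each with d-period ρ where ρ ≤ |U| and ρ ≤ |V|. Then ρ is a (2d + ρ)-period of the concatenation U·V. -/
open Function

/- A mismatch of `U ++ V` at shift `ρ` is either a mismatch of `U`, a mismatch of `V` moved
by `|U|`, or one of the `ρ` positions whose partner `i + ρ` crosses from `U` into `V`. -/

section ShiftMismatches

variable {α : Type*} [DecidableEq α]

theorem hamL_eq_card_filter (A B : List α) :
    hamL A B = ((Finset.range A.length).filter fun i => A[i]? ≠ B[i]?).card :=
  rfl

def shiftMismatches (X : List α) (ρ : ℕ) : Finset ℕ :=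
  (Finset.range (X.length - ρ)).filter fun i => X[i]? ≠ X[i + ρ]?

theorem mem_shiftMismatches {X : List α} {ρ i : ℕ} :
    i ∈ shiftMismatches X ρ ↔ i < X.length - ρ ∧ X[i]? ≠ X[i + ρ]? := by
  rw [shiftMismatches, Finset.mem_filter, Finset.mem_range]

theorem isPeriodL_iff_card_shiftMismatches_le (X : List α) (ρ d : ℕ) :
    isPeriodL X ρ d ↔ (shiftMismatches X ρ).card ≤ d := by
  suffices hamL (X.take (X.length - ρ)) (X.drop ρ) = (shiftMismatches X ρ).card by
    rw [isPeriodL, this]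
  rw [hamL_eq_card_filter, List.length_take_of_le (Nat.sub_le _ _)]
  refine congrArg Finset.card (Finset.filter_congr fun i hi => ?_)
  rw [Finset.mem_range] at hi
  rw [List.getElem?_take_of_lt hi, List.getElem?_drop, Nat.add_comm]

theorem shiftMismatches_append_subset (U V : List α) (ρ : ℕ) :
    shiftMismatches (U ++ V) ρ ⊆ shiftMismatches U ρ ∪ Finset.Ico (U.length - ρ) U.length ∪
      (shiftMismatches V ρ).map (addLeftEmbedding U.length) := by
  intro i hi
  rw [mem_shiftMismatches, List.length_append] at hi
  simp only [Finset.mem_union, Finset.mem_Ico, Finset.mem_map, addLeftEmbedding_apply,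
    mem_shiftMismatches]
  obtain ⟨hi_lt, hne⟩ := hi
  rcases lt_or_ge i (U.length - ρ) with hi_U | hi_U
  · rw [List.getElem?_append_left (by omega), List.getElem?_append_left (by omega)] at hne
    exact Or.inl (Or.inl ⟨hi_U, hne⟩)
  rcases lt_or_ge i U.length with hi_V | hi_V
  · exact Or.inl (Or.inr ⟨hi_U, hi_V⟩)
  refine Or.inr ⟨i - U.length, ⟨by omega, ?_⟩, by omega⟩
  rwa [List.getElem?_append_right hi_V, List.getElem?_append_right (by omega),
    Nat.sub_add_comm hi_V] at hne

theorem isPeriodL_append {U V : List α} {ρ d₁ d₂ : ℕ}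
    (hU : isPeriodL U ρ d₁) (hV : isPeriodL V ρ d₂) :
    isPeriodL (U ++ V) ρ (d₁ + ρ + d₂) := by
  rw [isPeriodL_iff_card_shiftMismatches_le] at hU hV ⊢
  calc (shiftMismatches (U ++ V) ρ).card
      ≤ (shiftMismatches U ρ).card + (Finset.Ico (U.length - ρ) U.length).card +
          ((shiftMismatches V ρ).map (addLeftEmbedding U.length)).card :=
        (Finset.card_le_card (shiftMismatches_append_subset U V ρ)).trans <|
          (Finset.card_union_le _ _).trans (Nat.add_le_add_right (Finset.card_union_le _ _) _)
    _ ≤ d₁ + ρ + d₂ := by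
        rw [Nat.card_Ico, Finset.card_map]
        omega

end ShiftMismatches

theorem stmt10_general {α : Type*} [DecidableEq α]
    (U V : List α) (ρ d : ℕ)
    (hpU : isPeriodL U ρ d) (hpV : isPeriodL V ρ d) :
    isPeriodL (U ++ V) ρ (2 * d + ρ) := by
  have h := isPeriodL_append hpU hpV
  rwa [show d + ρ + d = 2 * d + ρ by omega] at h

theorem stmt10 {α : Type*} [DecidableEq α]
    (U V : List α) (ρ d : ℕ) (hρ : 0 < ρ)
    (hU : ρ ≤ U.length) (hV : ρ ≤ V.length)
    (hpU : isPeriodL U ρ d) (hpV : isPeriodL V ρ d) :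
    isPeriodL (U ++ V) ρ (2 * d + ρ) :=
  stmt10_general U V ρ d hpU hpV
end

section
/- If ρ is the smallest d-period of a pattern P of length m, then any two starting positions of (d/2)-mismatch occurrences of P in a text T are at least ρ positions apart; that is, if HAM(P, T[i .. i+m-1]) ≤ d/2 and HAM(P, T[j .. j+m-1]) ≤ d/2 with i < j, then j - i ≥ ρ. -/
open Function

theorem stmt11 {α : Type*} [DecidableEq α]
    (P T : List α) (m d ρ : ℕ) (hm : P.length = m) (hmn : m ≤ T.length)
    (hmin : IsLeast {π : ℕ | 0 < π ∧ π < m ∧ isPeriodL P π d} ρ)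
    (i j : ℕ) (hij : i < j) (hjm : j + m ≤ T.length)
    (hi : 2 * hamL P ((T.drop i).take m) ≤ d)
    (hj : 2 * hamL P ((T.drop j).take m) ≤ d) :
    ρ ≤ j - i := by
  obtain ⟨⟨hρpos, hρm, hρper⟩, hlb⟩ := hmin
  set π := j - i with hπ
  have hπpos : 0 < π := Nat.sub_pos_of_lt hij
  by_cases hπm : π < m
  · -- show π is a d-period and conclude by minimality
    refine hlb ⟨hπpos, hπm, ?_⟩
    unfold isPeriodL
    -- rewrite hamL's as Finset cards
    have hcard : ∀ (A B : List α), hamL A B =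
        ((Finset.range A.length).filter (fun k => A[k]? ≠ B[k]?)).card := fun A B => rfl
    set Yi := (T.drop i).take m with hYi
    set Yj := (T.drop j).take m with hYj
    have him : i + m ≤ T.length := le_trans (by omega) hjm
    have hYik : ∀ k, k < m → Yi[k]? = T[i + k]? := by
      intro k hk
      rw [hYi, List.getElem?_take_of_lt hk, List.getElem?_drop]
    have hYjk : ∀ k, k < m → Yj[k]? = T[j + k]? := by
      intro k hk
      rw [hYj, List.getElem?_take_of_lt hk, List.getElem?_drop]
    set A := P.take (P.length - π) with hA
    set B := P.drop π with hB
    have hAlen : A.length = m - π := by simp [hA, hm]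
    have hAk : ∀ k, k < m - π → A[k]? = P[k]? :=
      fun k hk => List.getElem?_take_of_lt (by omega)
    have hBk : ∀ k, B[k]? = P[π + k]? := fun k => List.getElem?_drop ..
    set S := (Finset.range (m - π)).filter (fun k => A[k]? ≠ B[k]?) with hS
    set S1 := (Finset.range m).filter (fun k => P[k]? ≠ Yi[k]?) with hS1
    set S2 := (Finset.range m).filter (fun k => P[k]? ≠ Yj[k]?) with hS2
    have hsub : S ⊆ ((S1.filter (fun k => π ≤ k)).image (fun k => k - π)) ∪ S2 := by
      intro k hk
      simp only [hS, Finset.mem_filter, Finset.mem_range] at hk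
      obtain ⟨hklt, hkne⟩ := hk
      rw [hAk k hklt, hBk k] at hkne
      have hkm : k < m := by omega
      have hTeq : T[i + (π + k)]? = T[j + k]? := by
        congr 1; omega
      by_cases h2 : P[k]? = Yj[k]?
      · -- then mismatch must be at k + π in first occurrence
        have hπk : π + k < m := by omega
        have h1 : P[π + k]? ≠ Yi[π + k]? := by
          rw [hYik _ hπk, hTeq, ← hYjk _ hkm, ← h2]
          exact fun h => hkne h.symm
        refine Finset.mem_union_left _ ?_
        refine Finset.mem_image.mpr ⟨π + k, ?_, by omega⟩
        simp only [Finset.mem_filter, Finset.mem_range, hS1]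
        exact ⟨⟨hπk, h1⟩, by omega⟩
      · exact Finset.mem_union_right _ (by
          simp only [hS2, Finset.mem_filter, Finset.mem_range]
          exact ⟨hkm, h2⟩)
    have hScard : S.card ≤ S1.card + S2.card := by
      calc S.card ≤ (((S1.filter (fun k => π ≤ k)).image (fun k => k - π)) ∪ S2).card :=
            Finset.card_le_card hsub
        _ ≤ ((S1.filter (fun k => π ≤ k)).image (fun k => k - π)).card + S2.card :=
            Finset.card_union_le _ _
        _ ≤ S1.card + S2.card := by
            refine Nat.add_le_add_right ?_ S2.card
            exact le_trans
              (Finset.card_image_le (s := S1.filter (fun k => π ≤ k)) (f := fun k => k - π))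
              (Finset.card_le_card (Finset.filter_subset (fun k => π ≤ k) S1))
    have e1 : hamL P Yi = S1.card := by rw [hcard, hm]
    have e2 : hamL P Yj = S2.card := by rw [hcard, hm]
    have e0 : hamL A B = S.card := by rw [hcard, hAlen]
    rw [e0]
    omega
  · omega
end
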